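/- The function f : [0,1] → ℝ defined by f(x) := h((1 − √x)/2) is concave on [0,1], where h is the binary entropy function h(q) := −q log₂ q − (1−q) log₂(1−q) (with h(0) = h(1) = 0). -/

import Mathlib

/-!
With `s = √x`, the derivative of `x ↦ h((1 - √x)/2)` on `(0,1)` is
`-(log (1 + s) - log (1 - s)) / (4 s log 2)`. The power series
`(log (1 + s) - log (1 - s)) / s = ∑ 2 s^(2k) / (2k + 1)` has nonnegative coefficients, so it
increases with `s`; hence the derivative is antitone and the function is concave.
-/

noncomputable section

/-- The base-2 binary entropy function `h(q) = −q log₂ q − (1−q) log₂ (1−q)`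
(with the convention `0 · log₂ 0 = 0`, automatic in Lean). -/
def binEnt (q : ℝ) : ℝ := -q * Real.logb 2 q - (1 - q) * Real.logb 2 (1 - q)

open Real Set

lemma binEnt_eq_binEntropy_div (q : ℝ) : binEnt q = binEntropy q / log 2 := by
  simp only [binEnt, binEntropy, logb, log_inv]
  ring

lemma mapsTo_sqrt_Ioo_zero_one : MapsTo (√·) (Ioo 0 1) (Ioo 0 1) := fun _ ⟨hx₀, hx₁⟩ =>
  ⟨sqrt_pos.2 hx₀, by simpa using sqrt_lt_sqrt hx₀.le hx₁⟩

lemma monotoneOn_log_one_add_sub_log_one_sub_div :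
    MonotoneOn (fun s : ℝ => (log (1 + s) - log (1 - s)) / s) (Ioo 0 1) := by
  intro s ⟨hs₀, hs₁⟩ t ⟨ht₀, ht₁⟩ hst
  have series {u : ℝ} (hu₀ : 0 < u) (hu₁ : u < 1) :
      HasSum (fun k : ℕ => 2 * (1 / (2 * k + 1)) * u ^ (2 * k))
        ((log (1 + u) - log (1 - u)) / u) := by
    refine ((hasSum_log_sub_log_of_abs_lt_one (abs_lt.2 ⟨by linarith, hu₁⟩)).div_const u).congr_fun
      fun k => ?_
    rw [pow_succ, ← mul_assoc, mul_div_cancel_right₀ _ hu₀.ne']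
  exact hasSum_le (fun k => by gcongr) (series hs₀ hs₁) (series ht₀ ht₁)

lemma hasDerivAt_binEnt_one_sub_sqrt_div_two {x : ℝ} (hx : x ∈ Ioo 0 1) :
    HasDerivAt (fun x => binEnt ((1 - √x) / 2))
      (-((log (1 + √x) - log (1 - √x)) / √x) / (4 * log 2)) x := by
  obtain ⟨hs₀, hs₁⟩ := mapsTo_sqrt_Ioo_zero_one hx
  have hq₀ : (1 - √x) / 2 ≠ 0 := by linarith
  have hq₁ : (1 - √x) / 2 ≠ 1 := by linarith
  have h := ((hasDerivAt_binEntropy hq₀ hq₁).comp x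
    (((hasDerivAt_sqrt hx.1.ne').const_sub 1).div_const 2)).div_const (log 2)
  simp only [binEnt_eq_binEntropy_div]
  refine h.congr_deriv ?_
  rw [show 1 - (1 - √x) / 2 = (1 + √x) / 2 by ring, log_div (by linarith) two_ne_zero,
    log_div (by linarith) two_ne_zero]
  field_simp
  ring

/-- `x ↦ h((1 − √x)/2)` is concave on `[0,1]`. -/
theorem binEnt_sqrt_concave :
    ConcaveOn ℝ (Set.Icc (0 : ℝ) 1) (fun x => binEnt ((1 - Real.sqrt x) / 2)) := by
  have hderiv {x : ℝ} (hx : x ∈ interior (Icc 0 1)) :=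
    hasDerivAt_binEnt_one_sub_sqrt_div_two (interior_Icc (a := (0 : ℝ)) ▸ hx)
  refine AntitoneOn.concaveOn_of_deriv (convex_Icc 0 1) ?_
    (fun x hx => (hderiv hx).differentiableAt.differentiableWithinAt) ?_
  · simp only [binEnt_eq_binEntropy_div]
    fun_prop
  have hmono := monotoneOn_log_one_add_sub_log_one_sub_div.comp
    (fun _ _ _ _ hxy => sqrt_le_sqrt hxy) mapsTo_sqrt_Ioo_zero_one
  refine AntitoneOn.congr ?_ (fun x hx => (hderiv hx).deriv.symm)
  rw [interior_Icc]
  exact fun x hx y hy hxy =>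
    div_le_div_of_nonneg_right (neg_le_neg (hmono hx hy hxy)) (by positivity)

end
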